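/- Let q be a complex number with 0 < |q| < 1, and let b, c be complex numbers with b ≠ 0, |c/b| < 1, and c·q^k ≠ 1 for every integer k ≥ 0. Then ∑_{n=1}^{∞} (1/(1 − q^n))·((b;q)_n/(c;q)_n)·(c/b)^n = ((c/b;q)_∞/(c;q)_∞) · ∑_{n=0}^{∞} n·((b;q)_n/(q;q)_n)·(c/b)^n. -/

import Mathlib

/-!
Write `t = c / b` and regard both sides as functions `L c`, `R c` of `c`, with `b` fixed.
They satisfy the same first-order `q`-difference equation
`L c - L (c q) = 1 / (1 - t) - 1 / (1 - c)`: for `L` this is a telescoping evaluation of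
`∑ (b;q)_n / (c;q)_{n+1} t^n`; for `R` it follows from the `q`-binomial theorem
`∑ (b;q)_n / (q;q)_n t^n = (bt;q)_∞ / (t;q)_∞` and the `q`-difference equation of
`∑ n (b;q)_n / (q;q)_n t^n`. Both sides tend to `0` along `c q^K`, so their difference, which is
invariant under `c ↦ c q`, vanishes. The `q`-binomial theorem itself is proved by the same
descent.
-/

/-- The finite q-Pochhammer symbol `(a;q)_n = ∏_{k=0}^{n-1} (1 - a q^k)`. -/
noncomputable def qPoch (a q : ℂ) (n : ℕ) : ℂ := ∏ k ∈ Finset.range n, (1 - a * q ^ k)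

/-- The infinite q-Pochhammer symbol `(a;q)_∞ = ∏_{k=0}^{∞} (1 - a q^k)`. -/
noncomputable def qPochInf (a q : ℂ) : ℂ := ∏' k : ℕ, (1 - a * q ^ k)

open Filter Topology

section Series

variable {𝕜 : Type*} [NormedField 𝕜]

theorem eq_of_tendsto_of_forall_succ_eq {X : Type*} [TopologicalSpace X] [T2Space X]
    {u : ℕ → X} {a : X} (hu : ∀ n, u (n + 1) = u n) (h : Tendsto u atTop (𝓝 a)) : u 0 = a := by
  have hconst : u = fun _ => u 0 := funext fun n => by
    induction n with
    | zero => rfl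
    | succ n ih => rw [hu, ih]
  rw [hconst] at h
  exact tendsto_nhds_unique tendsto_const_nhds h

theorem exists_forall_norm_le_of_tendsto {E : Type*} [SeminormedAddCommGroup E] {u : ℕ → E}
    {a : E} (h : Tendsto u atTop (𝓝 a)) : ∃ C, ∀ n, ‖u n‖ ≤ C := by
  obtain ⟨C, hC⟩ := isBounded_iff_forall_norm_le.1 (Metric.isBounded_range_of_tendsto u h)
  exact ⟨C, fun n => hC _ ⟨n, rfl⟩⟩

theorem summable_norm_mul_pow_of_norm_le_linear {a : ℕ → 𝕜} {C r : ℝ}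
    (ha : ∀ n, ‖a n‖ ≤ C * (n + 1)) (hr0 : 0 ≤ r) (hr : r < 1) :
    Summable fun n => ‖a n‖ * r ^ n := by
  have hr' : ‖r‖ < 1 := by rwa [Real.norm_of_nonneg hr0]
  have hgeom : Summable fun n : ℕ => C * ((n : ℝ) ^ 1 * r ^ n + r ^ n) :=
    ((summable_pow_mul_geometric_of_norm_lt_one 1 hr').add
      (summable_geometric_of_lt_one hr0 hr)).mul_left C
  refine hgeom.of_nonneg_of_le (fun n => by positivity) fun n => ?_
  calc ‖a n‖ * r ^ n ≤ C * (n + 1) * r ^ n := by gcongr; exact ha n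
    _ = C * ((n : ℝ) ^ 1 * r ^ n + r ^ n) := by ring

theorem tendsto_tsum_mul_pow_succ_nhds_zero {ι : Type*} {l : Filter ι} {a : ι → ℕ → 𝕜}
    {C : ℝ} (ha : ∀ i n, ‖a i n‖ ≤ C) {u : ι → 𝕜} (hu : Tendsto u l (𝓝 0)) :
    Tendsto (fun i => ∑' n, a i n * u i ^ (n + 1)) l (𝓝 0) := by
  have hsmall : ∀ᶠ i in l, ‖u i‖ ≤ 1 / 2 :=
    hu.norm.eventually (eventually_le_nhds (by norm_num : (‖(0 : 𝕜)‖) < 1 / 2))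
  refine squeeze_zero_norm' ?_ (by simpa using (hu.norm.const_mul (2 * C)))
  filter_upwards [hsmall] with i hi
  have hbound : ∀ n, ‖a i n * u i ^ (n + 1)‖ ≤ C * ‖u i‖ * (1 / 2) ^ n := fun n => by
    have hC : 0 ≤ C := (norm_nonneg _).trans (ha i 0)
    calc ‖a i n * u i ^ (n + 1)‖ = ‖a i n‖ * ‖u i‖ * ‖u i‖ ^ n := by
          rw [norm_mul, norm_pow, pow_succ]; ring
      _ ≤ C * ‖u i‖ * (1 / 2) ^ n := by gcongr; exact ha i n
  calc ‖∑' n, a i n * u i ^ (n + 1)‖ ≤ C * ‖u i‖ * 2 :=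
        tsum_of_norm_bounded (hasSum_geometric_two.mul_left _) hbound
    _ = 2 * C * ‖u i‖ := by ring

variable [CompleteSpace 𝕜]

theorem summable_mul_pow_of_norm_le_linear {a : ℕ → 𝕜} {C : ℝ}
    (ha : ∀ n, ‖a n‖ ≤ C * (n + 1)) {s : 𝕜} (hs : ‖s‖ < 1) : Summable fun n => a n * s ^ n :=
  .of_norm <| by
    simpa only [norm_mul, norm_pow] using
      summable_norm_mul_pow_of_norm_le_linear ha (norm_nonneg s) hs

theorem tendsto_tsum_mul_pow_nhds_zero {a : ℕ → 𝕜} {C : ℝ} (ha : ∀ n, ‖a n‖ ≤ C * (n + 1)) :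
    Tendsto (fun s => ∑' n, a n * s ^ n) (𝓝 0) (𝓝 (a 0)) := by
  have hcont :
      ContinuousOn (fun s => ∑' n, a n * s ^ n) (Metric.closedBall (0 : 𝕜) (1 / 2)) :=
    continuousOn_tsum (fun n => (continuous_const.mul (continuous_pow n)).continuousOn)
      (summable_norm_mul_pow_of_norm_le_linear (r := 1 / 2) ha (by norm_num) (by norm_num))
      fun n s hs => by
        rw [norm_mul, norm_pow]
        gcongr
        simpa using hs
  have h0 : ∑' n, a n * (0 : 𝕜) ^ n = a 0 := by
    rw [tsum_eq_single 0 fun n hn => by simp [hn]]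
    simp
  simpa [h0] using (hcont.continuousAt (Metric.closedBall_mem_nhds 0 (by norm_num))).tendsto

theorem summable_mul_pow_of_tendsto {a : ℕ → 𝕜} {l : 𝕜} (ha : Tendsto a atTop (𝓝 l)) {s : 𝕜}
    (hs : ‖s‖ < 1) : Summable fun n => a n * s ^ n := by
  obtain ⟨C, hC⟩ := exists_forall_norm_le_of_tendsto ha
  have hC0 : 0 ≤ C := (norm_nonneg _).trans (hC 0)
  have hlin : ∀ n : ℕ, C ≤ C * (n + 1) := fun n =>
    le_mul_of_one_le_right hC0 (by linarith [n.cast_nonneg (α := ℝ)])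
  exact summable_mul_pow_of_norm_le_linear (fun n => (hC n).trans (hlin n)) hs

end Series

section QPochhammer

variable {a q : ℂ}

@[simp] theorem qPoch_zero (a q : ℂ) : qPoch a q 0 = 1 := Finset.prod_range_zero _

theorem qPoch_succ (a q : ℂ) (n : ℕ) : qPoch a q (n + 1) = qPoch a q n * (1 - a * q ^ n) :=
  Finset.prod_range_succ _ _

@[simp] theorem qPoch_one (a q : ℂ) : qPoch a q 1 = 1 - a := by simp [qPoch]

theorem qPoch_add (a q : ℂ) (m n : ℕ) :
    qPoch a q (m + n) = qPoch a q m * qPoch (a * q ^ m) q n := by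
  simp only [qPoch, Finset.prod_range_add, pow_add, mul_assoc]

theorem qPoch_succ' (a q : ℂ) (n : ℕ) : qPoch a q (n + 1) = (1 - a) * qPoch (a * q) q n := by
  rw [add_comm, qPoch_add]
  simp [qPoch]

theorem qPoch_ne_zero (ha : ∀ k, a * q ^ k ≠ 1) (n : ℕ) : qPoch a q n ≠ 0 :=
  Finset.prod_ne_zero_iff.2 fun k _ => sub_ne_zero.2 (ha k).symm

theorem norm_mul_pow_lt_one {t : ℂ} (hq : ‖q‖ ≤ 1) (ht : ‖t‖ < 1) (k : ℕ) :
    ‖t * q ^ k‖ < 1 := by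
  rw [norm_mul, norm_pow]
  exact (mul_le_of_le_one_right (norm_nonneg t) (pow_le_one₀ (norm_nonneg q) hq)).trans_lt ht

theorem mul_pow_ne_one {t : ℂ} (hq : ‖q‖ ≤ 1) (ht : ‖t‖ < 1) (k : ℕ) : t * q ^ k ≠ 1 :=
  fun h => by simpa [h] using norm_mul_pow_lt_one hq ht k

theorem mul_pow_add_ne_one (ha : ∀ k, a * q ^ k ≠ 1) (m k : ℕ) : a * q ^ m * q ^ k ≠ 1 := by
  simpa [mul_assoc, pow_add] using ha (m + k)

theorem summable_norm_mul_pow (a : ℂ) (hq : ‖q‖ < 1) : Summable fun k : ℕ => ‖a * q ^ k‖ := by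
  simpa [norm_mul, norm_pow] using
    (summable_geometric_of_lt_one (norm_nonneg q) hq).mul_left ‖a‖

theorem multipliable_one_sub_mul_pow (a : ℂ) (hq : ‖q‖ < 1) :
    Multipliable fun k : ℕ => 1 - a * q ^ k := by
  simpa [sub_eq_add_neg] using
    multipliable_one_add_of_summable (f := fun k : ℕ => -(a * q ^ k))
      (by simpa using summable_norm_mul_pow a hq)

theorem tendsto_qPoch (a : ℂ) (hq : ‖q‖ < 1) :
    Tendsto (qPoch a q) atTop (𝓝 (qPochInf a q)) :=
  (multipliable_one_sub_mul_pow a hq).hasProd.tendsto_prod_nat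

theorem qPochInf_ne_zero (hq : ‖q‖ < 1) (ha : ∀ k, a * q ^ k ≠ 1) : qPochInf a q ≠ 0 := by
  simpa [qPochInf, sub_eq_add_neg] using
    tprod_one_add_ne_zero_of_summable (f := fun k : ℕ => -(a * q ^ k))
      (fun k => by simpa [← sub_eq_add_neg] using sub_ne_zero.2 (ha k).symm)
      (by simpa using summable_norm_mul_pow a hq)

theorem qPoch_mul_qPochInf (a : ℂ) (hq : ‖q‖ < 1) (n : ℕ) :
    qPoch a q n * qPochInf (a * q ^ n) q = qPochInf a q := by
  have h : Multipliable fun k => 1 - a * q ^ (k + n) :=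
    (multipliable_one_sub_mul_pow (a * q ^ n) hq).congr fun k => by ring
  rw [qPochInf, qPochInf, ← Multipliable.prod_mul_tprod_nat_mul' (f := fun k => 1 - a * q ^ k) h]
  exact congrArg _ (tprod_congr fun k => by ring)

theorem qPochInf_eq_one_sub_mul (a : ℂ) (hq : ‖q‖ < 1) :
    qPochInf a q = (1 - a) * qPochInf (a * q) q := by
  simpa [qPoch] using (qPoch_mul_qPochInf a hq 1).symm

theorem tendsto_qPochInf_mul_pow (hq : ‖q‖ < 1) (ha : ∀ k, a * q ^ k ≠ 1) :
    Tendsto (fun n => qPochInf (a * q ^ n) q) atTop (𝓝 1) := by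
  have hP := qPochInf_ne_zero hq ha
  have hlim := (tendsto_const_nhds (x := qPochInf a q)).div (tendsto_qPoch a hq) hP
  rw [div_self hP] at hlim
  refine hlim.congr fun n => ?_
  rw [Pi.div_apply, ← qPoch_mul_qPochInf a hq n, mul_div_cancel_left₀ _ (qPoch_ne_zero ha n)]

theorem exists_forall_norm_inv_qPoch_le (hq : ‖q‖ < 1) (ha : ∀ k, a * q ^ k ≠ 1) :
    ∃ C, ∀ n, ‖(qPoch a q n)⁻¹‖ ≤ C :=
  exists_forall_norm_le_of_tendsto ((tendsto_qPoch a hq).inv₀ (qPochInf_ne_zero hq ha))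

end QPochhammer

section QBinomial

variable {b q s : ℂ}

noncomputable def qBinomCoeff (b q : ℂ) (n : ℕ) : ℂ := qPoch b q n / qPoch q q n

noncomputable def qBinomSeries (b q s : ℂ) : ℂ := ∑' n, qBinomCoeff b q n * s ^ n

/-- The Euler operator `s d/ds` applied termwise to `qBinomSeries`. -/
noncomputable def qBinomThetaSeries (b q s : ℂ) : ℂ :=
  ∑' n : ℕ, (n : ℂ) * qBinomCoeff b q n * s ^ n

@[simp] theorem qBinomCoeff_zero (b q : ℂ) : qBinomCoeff b q 0 = 1 := by simp [qBinomCoeff]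

theorem one_sub_pow_succ_mul_qBinomCoeff_succ (b : ℂ) (hq : ‖q‖ < 1) (n : ℕ) :
    (1 - q ^ (n + 1)) * qBinomCoeff b q (n + 1) = (1 - b * q ^ n) * qBinomCoeff b q n := by
  have hqq : ∀ k, q * q ^ k ≠ 1 := mul_pow_ne_one hq.le hq
  have h1 : 1 - q * q ^ n ≠ 0 := sub_ne_zero.2 (hqq n).symm
  rw [qBinomCoeff, qBinomCoeff, qPoch_succ, qPoch_succ, pow_succ']
  field_simp [qPoch_ne_zero hqq n]

theorem exists_norm_qBinomCoeff_le (b : ℂ) (hq : ‖q‖ < 1) :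
    ∃ C, ∀ n, ‖qBinomCoeff b q n‖ ≤ C * (n + 1) ∧
      ‖(n : ℂ) * qBinomCoeff b q n‖ ≤ C * (n + 1) := by
  obtain ⟨C, hC⟩ := exists_forall_norm_le_of_tendsto <|
    (tendsto_qPoch b hq).div (tendsto_qPoch q hq) (qPochInf_ne_zero hq (mul_pow_ne_one hq.le hq))
  have hC0 : 0 ≤ C := (norm_nonneg _).trans (hC 0)
  refine ⟨C, fun n => ⟨(hC n).trans (le_mul_of_one_le_right hC0 (by linarith)), ?_⟩⟩
  rw [norm_mul, Complex.norm_natCast, mul_comm]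
  exact mul_le_mul (hC n) (by linarith) (by positivity) hC0

theorem summable_qBinomSeries (b : ℂ) (hq : ‖q‖ < 1) (hs : ‖s‖ < 1) :
    Summable fun n => qBinomCoeff b q n * s ^ n :=
  have ⟨_, hC⟩ := exists_norm_qBinomCoeff_le b hq
  summable_mul_pow_of_norm_le_linear (fun n => (hC n).1) hs

theorem summable_qBinomThetaSeries (b : ℂ) (hq : ‖q‖ < 1) (hs : ‖s‖ < 1) :
    Summable fun n : ℕ => (n : ℂ) * qBinomCoeff b q n * s ^ n :=
  have ⟨_, hC⟩ := exists_norm_qBinomCoeff_le b hq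
  summable_mul_pow_of_norm_le_linear (fun n => (hC n).2) hs

theorem tendsto_qBinomSeries_nhds_zero (b : ℂ) (hq : ‖q‖ < 1) :
    Tendsto (qBinomSeries b q) (𝓝 0) (𝓝 1) := by
  obtain ⟨_, hC⟩ := exists_norm_qBinomCoeff_le b hq
  have h := tendsto_tsum_mul_pow_nhds_zero fun n => (hC n).1
  rw [qBinomCoeff_zero] at h
  exact h

theorem tendsto_qBinomThetaSeries_nhds_zero (b : ℂ) (hq : ‖q‖ < 1) :
    Tendsto (qBinomThetaSeries b q) (𝓝 0) (𝓝 0) := by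
  obtain ⟨_, hC⟩ := exists_norm_qBinomCoeff_le b hq
  have h := tendsto_tsum_mul_pow_nhds_zero fun n => (hC n).2
  rw [Nat.cast_zero, zero_mul] at h
  exact h

theorem one_sub_mul_qBinomSeries (b : ℂ) (hq : ‖q‖ < 1) (hs : ‖s‖ < 1) :
    (1 - s) * qBinomSeries b q s = (1 - b * s) * qBinomSeries b q (s * q) := by
  have hsq : ‖s * q‖ < 1 := by simpa using norm_mul_pow_lt_one hq.le hs 1
  have hA := summable_qBinomSeries b hq hs
  have hB := summable_qBinomSeries b hq hsq
  have hshift : ∀ n, qBinomCoeff b q (n + 1) * s ^ (n + 1)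
        - qBinomCoeff b q (n + 1) * (s * q) ^ (n + 1)
      = s * (qBinomCoeff b q n * s ^ n) - b * s * (qBinomCoeff b q n * (s * q) ^ n) := fun n => by
    linear_combination s ^ (n + 1) * one_sub_pow_succ_mul_qBinomCoeff_succ b hq n
  have h := (hA.sub hB).tsum_eq_zero_add
  simp only [hshift, Summable.tsum_sub hA hB,
    Summable.tsum_sub (hA.mul_left s) (hB.mul_left (b * s)), tsum_mul_left, pow_zero, sub_self,
    zero_add] at h
  unfold qBinomSeries
  linear_combination h

theorem one_sub_mul_qBinomThetaSeries (b : ℂ) (hq : ‖q‖ < 1) (hs : ‖s‖ < 1) :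
    (1 - s) * qBinomThetaSeries b q s = (1 - b * s) * qBinomThetaSeries b q (s * q)
      + s * qBinomSeries b q s - b * s * qBinomSeries b q (s * q) := by
  have hsq : ‖s * q‖ < 1 := by simpa using norm_mul_pow_lt_one hq.le hs 1
  have hA := summable_qBinomSeries b hq hs
  have hB := summable_qBinomSeries b hq hsq
  have hA' := summable_qBinomThetaSeries b hq hs
  have hB' := summable_qBinomThetaSeries b hq hsq
  have hshift : ∀ n, ((n + 1 : ℕ) : ℂ) * qBinomCoeff b q (n + 1) * s ^ (n + 1)
        - ((n + 1 : ℕ) : ℂ) * qBinomCoeff b q (n + 1) * (s * q) ^ (n + 1)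
      = (s * ((n : ℂ) * qBinomCoeff b q n * s ^ n) + s * (qBinomCoeff b q n * s ^ n))
        - (b * s * ((n : ℂ) * qBinomCoeff b q n * (s * q) ^ n)
          + b * s * (qBinomCoeff b q n * (s * q) ^ n)) := fun n => by
    push_cast
    linear_combination
      ((n : ℂ) + 1) * s ^ (n + 1) * one_sub_pow_succ_mul_qBinomCoeff_succ b hq n
  have h := (hA'.sub hB').tsum_eq_zero_add
  simp only [hshift, Summable.tsum_sub hA' hB',
    Summable.tsum_sub ((hA'.mul_left s).add (hA.mul_left s))
      ((hB'.mul_left (b * s)).add (hB.mul_left (b * s))),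
    Summable.tsum_add (hA'.mul_left s) (hA.mul_left s),
    Summable.tsum_add (hB'.mul_left (b * s)) (hB.mul_left (b * s)),
    tsum_mul_left, Nat.cast_zero, zero_mul, sub_self, zero_add] at h
  unfold qBinomThetaSeries qBinomSeries
  linear_combination h

theorem qBinomSeries_mul_qPochInf_div_qPochInf_eq (hq : ‖q‖ < 1) (hs : ‖s‖ < 1)
    (hbs : ∀ k, b * s * q ^ k ≠ 1) :
    qBinomSeries b q s * qPochInf s q / qPochInf (b * s) q
      = qBinomSeries b q (s * q) * qPochInf (s * q) q / qPochInf (b * s * q) q := by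
  have hbs1 : 1 - b * s ≠ 0 := sub_ne_zero.2 fun h => hbs 0 (by simpa using h.symm)
  have hPbsq : qPochInf (b * s * q) q ≠ 0 :=
    qPochInf_ne_zero hq (by simpa using mul_pow_add_ne_one hbs 1)
  rw [qPochInf_eq_one_sub_mul s hq, qPochInf_eq_one_sub_mul (b * s) hq,
    div_eq_div_iff (mul_ne_zero hbs1 hPbsq) hPbsq]
  linear_combination
    (qPochInf (s * q) q * qPochInf (b * s * q) q) * one_sub_mul_qBinomSeries b hq hs

theorem qBinomSeries_mul_qPochInf (hq : ‖q‖ < 1) (hs : ‖s‖ < 1)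
    (hbs : ∀ k, b * s * q ^ k ≠ 1) :
    qBinomSeries b q s * qPochInf s q = qPochInf (b * s) q := by
  set u : ℕ → ℂ := fun K =>
    qBinomSeries b q (s * q ^ K) * qPochInf (s * q ^ K) q / qPochInf (b * s * q ^ K) q
  have hu : ∀ K, u (K + 1) = u K := fun K => by
    have h := qBinomSeries_mul_qPochInf_div_qPochInf_eq (b := b) hq
      (norm_mul_pow_lt_one hq.le hs K) (by simpa [mul_assoc] using mul_pow_add_ne_one hbs K)
    simp only [u, pow_succ, ← mul_assoc] at h ⊢
    exact h.symm
  have hlim : Tendsto u atTop (𝓝 1) := by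
    have hsq : Tendsto (fun K => s * q ^ K) atTop (𝓝 0) := by
      simpa using (tendsto_pow_atTop_nhds_zero_of_norm_lt_one hq).const_mul s
    have h := (((tendsto_qBinomSeries_nhds_zero b hq).comp hsq).mul
      (tendsto_qPochInf_mul_pow hq (mul_pow_ne_one hq.le hs))).div
      (tendsto_qPochInf_mul_pow hq hbs) one_ne_zero
    rw [mul_one, div_one] at h
    exact h
  have h := eq_of_tendsto_of_forall_succ_eq hu hlim
  simp only [u, pow_zero, mul_one] at h
  rwa [div_eq_one_iff_eq (qPochInf_ne_zero hq hbs)] at h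

end QBinomial

section LeftSide

variable {q b c : ℂ}

noncomputable def lhsSeries (q b c : ℂ) : ℂ :=
  ∑' n : ℕ, (1 / (1 - q ^ (n + 1))) * (qPoch b q (n + 1) / qPoch c q (n + 1)) * (c / b) ^ (n + 1)

theorem tendsto_one_div_one_sub_pow (hq : ‖q‖ < 1) :
    Tendsto (fun n : ℕ => 1 / (1 - q ^ n)) atTop (𝓝 1) := by
  simpa using ((tendsto_const_nhds (x := (1 : ℂ))).sub
    (tendsto_pow_atTop_nhds_zero_of_norm_lt_one hq)).inv₀ (by simp)

theorem hasSum_qPoch_div_qPoch_succ_mul_pow (hq : ‖q‖ < 1) (hb : b ≠ 0) (hcb : ‖c / b‖ < 1)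
    (hc : ∀ k, c * q ^ k ≠ 1) :
    HasSum (fun n => qPoch b q n / qPoch c q (n + 1) * (c / b) ^ n) (1 / (1 - c / b)) := by
  obtain ⟨t, rfl⟩ : ∃ t, c = b * t := ⟨c / b, by field_simp⟩
  rw [mul_div_cancel_left₀ t hb] at hcb ⊢
  have ht1 : 1 - t ≠ 0 := sub_ne_zero.2 fun h => by simp [← h] at hcb
  have hlim : Tendsto (fun n => qPoch b q n / qPoch (b * t) q n) atTop
      (𝓝 (qPochInf b q / qPochInf (b * t) q)) :=
    (tendsto_qPoch b hq).div (tendsto_qPoch (b * t) hq) (qPochInf_ne_zero hq hc)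
  set v : ℕ → ℂ := fun n => qPoch b q n / qPoch (b * t) q n * t ^ n / (1 - t)
  have htel : ∀ n, qPoch b q n / qPoch (b * t) q (n + 1) * t ^ n = v n - v (n + 1) := fun n => by
    have h1 : 1 - b * t * q ^ n ≠ 0 := sub_ne_zero.2 (hc n).symm
    simp only [v, qPoch_succ]
    field_simp [qPoch_ne_zero hc n]
    ring
  have hv : Tendsto v atTop (𝓝 0) := by
    simpa using (hlim.mul (tendsto_pow_atTop_nhds_zero_of_norm_lt_one hcb)).div_const (1 - t)
  have hsum : Summable fun n => qPoch b q n / qPoch (b * t) q (n + 1) * t ^ n := by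
    refine summable_mul_pow_of_tendsto (l := qPochInf b q / qPochInf (b * t) q) ?_ hcb
    exact (tendsto_qPoch b hq).div ((tendsto_qPoch (b * t) hq).comp (tendsto_add_atTop_nat 1))
      (qPochInf_ne_zero hq hc)
  refine hsum.hasSum_iff_tendsto_nat.2 ?_
  simp only [htel, Finset.sum_range_sub']
  simpa [v] using tendsto_const_nhds.sub hv

theorem summable_lhsSeries (hq : ‖q‖ < 1) (hcb : ‖c / b‖ < 1) (hc : ∀ k, c * q ^ k ≠ 1) :
    Summable fun n : ℕ =>
      (1 / (1 - q ^ (n + 1))) * (qPoch b q (n + 1) / qPoch c q (n + 1)) * (c / b) ^ (n + 1) := by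
  have h := summable_mul_pow_of_tendsto ((tendsto_one_div_one_sub_pow hq).mul
    ((tendsto_qPoch b hq).div (tendsto_qPoch c hq) (qPochInf_ne_zero hq hc))) hcb
  exact (summable_nat_add_iff 1
    (f := fun n => (1 / (1 - q ^ n)) * (qPoch b q n / qPoch c q n) * (c / b) ^ n)).2 h

theorem lhsSeries_sub_lhsSeries_mul (hq : ‖q‖ < 1) (hb : b ≠ 0) (hcb : ‖c / b‖ < 1)
    (hc : ∀ k, c * q ^ k ≠ 1) :
    lhsSeries q b c - lhsSeries q b (c * q) = 1 / (1 - c / b) - 1 / (1 - c) := by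
  have hcq : ∀ k, c * q * q ^ k ≠ 1 := by simpa using mul_pow_add_ne_one hc 1
  have hcqb : ‖c * q / b‖ < 1 := by
    simpa [mul_div_right_comm] using norm_mul_pow_lt_one hq.le hcb 1
  have hterm : ∀ n : ℕ,
      (1 / (1 - q ^ (n + 1))) * (qPoch b q (n + 1) / qPoch c q (n + 1)) * (c / b) ^ (n + 1)
        - (1 / (1 - q ^ (n + 1))) * (qPoch b q (n + 1) / qPoch (c * q) q (n + 1))
          * (c * q / b) ^ (n + 1)
      = qPoch b q (n + 1) / qPoch c q (n + 1 + 1) * (c / b) ^ (n + 1) := fun n => by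
    have h1c : 1 - c ≠ 0 := sub_ne_zero.2 fun h => hc 0 (by simp [← h])
    have h1q : 1 - q ^ (n + 1) ≠ 0 :=
      sub_ne_zero.2 (pow_succ' q n ▸ mul_pow_ne_one hq.le hq n).symm
    have h1cq : 1 - c * q * q ^ n ≠ 0 := sub_ne_zero.2 (hcq n).symm
    rw [qPoch_succ' c q (n + 1), qPoch_succ' c q n, qPoch_succ (c * q) q n]
    field_simp [qPoch_ne_zero hcq n]
    ring
  have hstar := (hasSum_nat_add_iff' 1).2 (hasSum_qPoch_div_qPoch_succ_mul_pow hq hb hcb hc)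
  simp only [Finset.sum_range_one, qPoch_zero, zero_add, qPoch_one, pow_zero, mul_one] at hstar
  rw [lhsSeries, lhsSeries, ← (summable_lhsSeries hq hcb hc).tsum_sub
    (summable_lhsSeries hq hcqb hcq), tsum_congr hterm, hstar.tsum_eq]

theorem tendsto_lhsSeries_mul_pow (hq : ‖q‖ < 1) (hc : ∀ k, c * q ^ k ≠ 1) :
    Tendsto (fun K => lhsSeries q b (c * q ^ K)) atTop (𝓝 0) := by
  obtain ⟨C₁, hC₁⟩ := exists_forall_norm_le_of_tendsto (tendsto_one_div_one_sub_pow hq)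
  obtain ⟨C₂, hC₂⟩ := exists_forall_norm_le_of_tendsto (tendsto_qPoch b hq)
  obtain ⟨C₃, hC₃⟩ := exists_forall_norm_le_of_tendsto (tendsto_qPoch c hq)
  obtain ⟨C₄, hC₄⟩ := exists_forall_norm_inv_qPoch_le hq hc
  -- `(c q^K; q)_m = (c; q)_{K+m} / (c; q)_K` bounds the denominators uniformly in `K`
  have hcoeff : ∀ K n : ℕ,
      (1 / (1 - q ^ (n + 1))) * (qPoch b q (n + 1) / qPoch (c * q ^ K) q (n + 1))
        = 1 / (1 - q ^ (n + 1)) * qPoch b q (n + 1) * qPoch c q K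
          * (qPoch c q (K + (n + 1)))⁻¹ :=
    fun K n => by
      rw [qPoch_add c q K (n + 1)]
      field_simp [qPoch_ne_zero hc K]
  have hbound : ∀ K n : ℕ,
      ‖(1 / (1 - q ^ (n + 1))) * (qPoch b q (n + 1) / qPoch (c * q ^ K) q (n + 1))‖
        ≤ C₁ * C₂ * C₃ * C₄ := fun K n => by
    have h₁ : 0 ≤ C₁ := (norm_nonneg _).trans (hC₁ 0)
    have h₂ : 0 ≤ C₂ := (norm_nonneg _).trans (hC₂ 0)
    have h₃ : 0 ≤ C₃ := (norm_nonneg _).trans (hC₃ 0)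
    rw [hcoeff, norm_mul, norm_mul, norm_mul]
    gcongr
    exacts [hC₁ _, hC₂ _, hC₃ _, hC₄ _]
  have hu : Tendsto (fun K => c * q ^ K / b) atTop (𝓝 0) := by
    simpa using ((tendsto_pow_atTop_nhds_zero_of_norm_lt_one hq).const_mul c).div_const b
  exact tendsto_tsum_mul_pow_succ_nhds_zero hbound hu

end LeftSide

section RightSide

variable {q b c : ℂ}

noncomputable def rhsSeries (q b c : ℂ) : ℂ :=
  qPochInf (c / b) q / qPochInf c q * qBinomThetaSeries b q (c / b)

theorem rhsSeries_sub_rhsSeries_mul (hq : ‖q‖ < 1) (hb : b ≠ 0) (hcb : ‖c / b‖ < 1)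
    (hc : ∀ k, c * q ^ k ≠ 1) :
    rhsSeries q b c - rhsSeries q b (c * q) = 1 / (1 - c / b) - 1 / (1 - c) := by
  obtain ⟨t, rfl⟩ : ∃ t, c = b * t := ⟨c / b, by field_simp⟩
  rw [mul_div_cancel_left₀ t hb] at hcb
  have htq : ‖t * q‖ < 1 := by simpa using norm_mul_pow_lt_one hq.le hcb 1
  have hbtq : ∀ k, b * (t * q) * q ^ k ≠ 1 := by
    simpa [mul_assoc] using mul_pow_add_ne_one hc 1
  have h1t : 1 - t ≠ 0 := sub_ne_zero.2 fun h => by simp [← h] at hcb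
  have h1tb : 1 - t * b ≠ 0 :=
    sub_ne_zero.2 fun h => hc 0 (by rw [pow_zero, mul_one, mul_comm, ← h])
  have hR : qPochInf (t * q) q ≠ 0 := qPochInf_ne_zero hq (mul_pow_ne_one hq.le htq)
  have hS : qPochInf (b * (t * q)) q ≠ 0 := qPochInf_ne_zero hq hbtq
  have hqB := qBinomSeries_mul_qPochInf hq htq hbtq
  have hF : qBinomSeries b q (t * q) ≠ 0 := left_ne_zero_of_mul (hqB ▸ hS)
  have hf := one_sub_mul_qBinomSeries b hq hcb
  have hθ := one_sub_mul_qBinomThetaSeries b hq hcb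
  rw [rhsSeries, rhsSeries, mul_div_cancel_left₀ t hb, mul_assoc b t q,
    mul_div_cancel_left₀ _ hb, qPochInf_eq_one_sub_mul t hq,
    qPochInf_eq_one_sub_mul (b * t) hq, mul_assoc b t q, ← hqB]
  field_simp
  linear_combination (1 - t) * hθ + t * hf

theorem tendsto_rhsSeries_mul_pow (hq : ‖q‖ < 1) (hcb : ‖c / b‖ < 1)
    (hc : ∀ k, c * q ^ k ≠ 1) :
    Tendsto (fun K => rhsSeries q b (c * q ^ K)) atTop (𝓝 0) := by
  have hpow : Tendsto (fun K => c / b * q ^ K) atTop (𝓝 0) := by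
    simpa using (tendsto_pow_atTop_nhds_zero_of_norm_lt_one hq).const_mul (c / b)
  have h := ((tendsto_qPochInf_mul_pow hq (mul_pow_ne_one hq.le hcb)).div
    (tendsto_qPochInf_mul_pow hq hc) one_ne_zero).mul
    ((tendsto_qBinomThetaSeries_nhds_zero b hq).comp hpow)
  rw [mul_zero] at h
  exact h.congr fun K => by
    simp only [rhsSeries, mul_div_right_comm c, Function.comp_apply, Pi.div_apply]

end RightSide

theorem lhsSeries_eq_rhsSeries {q b c : ℂ} (hq : ‖q‖ < 1) (hb : b ≠ 0) (hcb : ‖c / b‖ < 1)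
    (hc : ∀ k, c * q ^ k ≠ 1) : lhsSeries q b c = rhsSeries q b c := by
  set u : ℕ → ℂ := fun K => lhsSeries q b (c * q ^ K) - rhsSeries q b (c * q ^ K)
  have hu : ∀ K, u (K + 1) = u K := fun K => by
    have hK : ‖c * q ^ K / b‖ < 1 := by
      simpa [mul_div_right_comm] using norm_mul_pow_lt_one hq.le hcb K
    have hcK := mul_pow_add_ne_one hc K
    have h := (lhsSeries_sub_lhsSeries_mul hq hb hK hcK).trans
      (rhsSeries_sub_rhsSeries_mul hq hb hK hcK).symm
    simp only [u, pow_succ, ← mul_assoc] at h ⊢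
    linear_combination -h
  have hlim : Tendsto u atTop (𝓝 0) := by
    simpa using (tendsto_lhsSeries_mul_pow hq hc).sub (tendsto_rhsSeries_mul_pow hq hcb hc)
  simpa [u, sub_eq_zero] using eq_of_tendsto_of_forall_succ_eq hu hlim

theorem stmt8_general (q b c : ℂ) (hq1 : ‖q‖ < 1)
    (hb : b ≠ 0) (hcb : ‖c / b‖ < 1) (hc : ∀ k : ℕ, c * q ^ k ≠ 1) :
    ∑' n : ℕ, (1 / (1 - q ^ (n + 1))) * (qPoch b q (n + 1) / qPoch c q (n + 1)) * (c / b) ^ (n + 1) =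
      (qPochInf (c / b) q / qPochInf c q) *
        ∑' n : ℕ, (n : ℂ) * (qPoch b q n / qPoch q q n) * (c / b) ^ n :=
  lhsSeries_eq_rhsSeries hq1 hb hcb hc

/-- The series on the left runs over `n ≥ 1`; here the summation index is shifted by one,
so that the term of index `n : ℕ` corresponds to `n + 1`. -/
theorem stmt8 (q b c : ℂ) (hq0 : 0 < ‖q‖) (hq1 : ‖q‖ < 1)
    (hb : b ≠ 0) (hcb : ‖c / b‖ < 1) (hc : ∀ k : ℕ, c * q ^ k ≠ 1) :
    ∑' n : ℕ, (1 / (1 - q ^ (n + 1))) * (qPoch b q (n + 1) / qPoch c q (n + 1)) * (c / b) ^ (n + 1) =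
      (qPochInf (c / b) q / qPochInf c q) *
        ∑' n : ℕ, (n : ℂ) * (qPoch b q n / qPoch q q n) * (c / b) ^ n :=
  stmt8_general q b c hq1 hb hcb hc
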